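/- Assume condition (A) holds for Π_h and that condition (B) holds for every index i = 2, …, n with constants κ_2, …, κ_n > 0 (no assumption is made for the subspace V_{h,1}). Let α, A > 0 be such that α‖u‖_𝕍² ≤ |||u|||_𝕍² ≤ A‖u‖_𝕍² for all u ∈ V_h. Then for all f ∈ X_h one has β‖f‖_𝕏² ≤ |||f|||_𝕏² ≤ B‖f‖_𝕏², where β = α / (2 · max{‖Π_h‖, κ_2, …, κ_n}² · ‖Π_h‖²) and B = ‖Π_h‖² A. -/

import Mathlib

/-- The squared splitting norm `|||u|||_𝕍²` in the Hilbert space `𝕍`. -/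
noncomputable def splitNormSqV {V : Type*} [NormedAddCommGroup V] [InnerProductSpace ℝ V]
    {n : ℕ} (Vsub : Fin n → Submodule ℝ V) (u : V) : ℝ :=
  sInf {s : ℝ | ∃ w : Fin n → V, (∀ i, w i ∈ Vsub i) ∧ (∑ i, w i) = u ∧ s = ∑ i, ‖w i‖ ^ 2}

/-- The squared splitting norm `|||f|||_𝕏²` in the quotient space `𝕏 = 𝕍/𝕍₀`,
with respect to the subspaces `X_{h,i} = T(V_{h,i})`. -/
noncomputable def splitNormSqX {V : Type*} [NormedAddCommGroup V] [InnerProductSpace ℝ V]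
    (V₀ : Submodule ℝ V) [IsClosed (V₀ : Set V)]
    {n : ℕ} (Vsub : Fin n → Submodule ℝ V) (f : V ⧸ V₀) : ℝ :=
  sInf {s : ℝ | ∃ g : Fin n → V ⧸ V₀,
    (∀ i, g i ∈ (Vsub i).map V₀.mkQ) ∧ (∑ i, g i) = f ∧ s = ∑ i, ‖g i‖ ^ 2}

/-!
Everything rests on lifting classes to representatives of controlled norm. In a Hilbert space
the quotient norm is attained, so `Π_h` lifts every `f ∈ X_h` to `V_h` with norm at most
`‖Π_h‖ ‖f‖`; subtracting a best approximation from `𝕍₀ ∩ V_{h,i}`, condition (B) turns a lift of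
`g ∈ X_{h,i}` into one inside `V_{h,i}`, at the cost of the factor `κ_i`.

The upper bound is `|||f|||_𝕏² ≤ |||Π_h m|||_𝕍² ≤ A ‖Π_h m‖²` for a minimal representative `m`.
For the lower bound, given a splitting `f = Σ g_i`, lift `g_1` to `w ∈ V_h` and each other `g_i`
to `v_i ∈ V_{h,i}`. The stability of `|||·|||_𝕍` bounds `α ‖Σ v_i‖²` by `Σ ‖v_i‖²`, and
`‖f‖² ≤ 2 ‖w‖² + 2 ‖Σ v_i‖²` produces the factor `2`; the term `‖w‖²` needs `α ≤ 1 ≤ ‖Π_h‖`,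
which holds as soon as `V_h ≠ 0`.
-/

lemma Submodule.exists_sum_eq_of_mem_iSup {R M ι : Type*} [Semiring R] [AddCommMonoid M]
    [Module R M] [Fintype ι] {p : ι → Submodule R M} {x : M} (hx : x ∈ ⨆ i, p i) :
    ∃ w : ι → M, (∀ i, w i ∈ p i) ∧ ∑ i, w i = x := by
  obtain ⟨w, hw, rfl⟩ := (Submodule.mem_iSup_iff_exists_finsupp p x).mp hx
  exact ⟨w, hw, (Finsupp.sum_fintype w (fun _ xi => xi) fun _ => rfl).symm⟩

lemma Finset.add_sum_update_zero {ι M : Type*} [Fintype ι] [DecidableEq ι] [AddCommMonoid M]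
    (g : ι → M) (j : ι) : g j + ∑ i, Function.update g j 0 i = ∑ i, g i := by
  rw [Finset.sum_update_of_mem (Finset.mem_univ j), zero_add, Finset.sdiff_singleton_eq_erase,
    Finset.add_sum_erase _ _ (Finset.mem_univ j)]

section SplittingNorms

variable {V : Type*} [NormedAddCommGroup V] [InnerProductSpace ℝ V] {n : ℕ}
  {Vsub : Fin n → Submodule ℝ V}

lemma splitNormSqV_le_sum {w : Fin n → V} (hw : ∀ i, w i ∈ Vsub i) :
    splitNormSqV Vsub (∑ i, w i) ≤ ∑ i, ‖w i‖ ^ 2 :=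
  csInf_le ⟨0, by rintro s ⟨w, -, -, rfl⟩; positivity⟩ ⟨w, hw, rfl, rfl⟩

lemma splitNormSqV_le_norm_sq {i : Fin n} {x : V} (hx : x ∈ Vsub i) :
    splitNormSqV Vsub x ≤ ‖x‖ ^ 2 := by
  have hsingle : ∀ j, (Pi.single i x : Fin n → V) j ∈ Vsub j := fun j => by
    by_cases hj : j = i
    · subst hj; simpa using hx
    · simp [hj]
  simpa [Pi.single_apply, apply_ite] using splitNormSqV_le_sum hsingle

lemma le_one_of_mul_norm_sq_le_splitNormSqV {α : ℝ}
    (hstable : ∀ u ∈ ⨆ i, Vsub i, α * ‖u‖ ^ 2 ≤ splitNormSqV Vsub u)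
    {u : V} (hu : u ∈ ⨆ i, Vsub i) (hu0 : u ≠ 0) : α ≤ 1 := by
  obtain ⟨w, hw, rfl⟩ := Submodule.exists_sum_eq_of_mem_iSup hu
  obtain ⟨i, -, hwi⟩ := Finset.exists_ne_zero_of_sum_ne_zero hu0
  have hle : α * ‖w i‖ ^ 2 ≤ 1 * ‖w i‖ ^ 2 := by
    rw [one_mul]
    exact (hstable _ (Submodule.mem_iSup_of_mem i (hw i))).trans (splitNormSqV_le_norm_sq (hw i))
  exact le_of_mul_le_mul_right hle (by positivity)

variable (V₀ : Submodule ℝ V) [IsClosed (V₀ : Set V)]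

lemma splitNormSqX_nonneg (f : V ⧸ V₀) : 0 ≤ splitNormSqX V₀ Vsub f :=
  Real.sInf_nonneg <| by rintro s ⟨g, -, -, rfl⟩; positivity

lemma splitNormSqX_le_sum {g : Fin n → V ⧸ V₀} (hg : ∀ i, g i ∈ (Vsub i).map V₀.mkQ) :
    splitNormSqX V₀ Vsub (∑ i, g i) ≤ ∑ i, ‖g i‖ ^ 2 :=
  csInf_le ⟨0, by rintro s ⟨g, -, -, rfl⟩; positivity⟩ ⟨g, hg, rfl, rfl⟩

lemma le_splitNormSqX {f : V ⧸ V₀} (hf : f ∈ (⨆ i, Vsub i).map V₀.mkQ) {c : ℝ}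
    (h : ∀ g : Fin n → V ⧸ V₀, (∀ i, g i ∈ (Vsub i).map V₀.mkQ) → ∑ i, g i = f →
      c ≤ ∑ i, ‖g i‖ ^ 2) :
    c ≤ splitNormSqX V₀ Vsub f := by
  rw [Submodule.map_iSup] at hf
  obtain ⟨g, hg, hgf⟩ := Submodule.exists_sum_eq_of_mem_iSup hf
  exact le_csInf ⟨_, g, hg, hgf, rfl⟩ fun s ⟨g, hg, hgf, hs⟩ => hs ▸ h g hg hgf

lemma splitNormSqX_mkQ_le_splitNormSqV {u : V} (hu : u ∈ ⨆ i, Vsub i) :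
    splitNormSqX V₀ Vsub (V₀.mkQ u) ≤ splitNormSqV Vsub u := by
  obtain ⟨w, hw, rfl⟩ := Submodule.exists_sum_eq_of_mem_iSup hu
  refine le_csInf ⟨_, w, hw, rfl, rfl⟩ fun s ⟨w', hw', hsum, hs⟩ => ?_
  calc splitNormSqX V₀ Vsub (V₀.mkQ (∑ i, w i))
      = splitNormSqX V₀ Vsub (∑ i, V₀.mkQ (w' i)) := by rw [← map_sum, hsum]
    _ ≤ ∑ i, ‖V₀.mkQ (w' i)‖ ^ 2 := splitNormSqX_le_sum V₀ fun i => Submodule.mem_map_of_mem (hw' i)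
    _ ≤ s := hs ▸ Finset.sum_le_sum fun i _ => by
      gcongr; exact Submodule.Quotient.norm_mk_le _ _

end SplittingNorms

section BoundedLifts

variable {V : Type*} [NormedAddCommGroup V] [InnerProductSpace ℝ V]

def HasBoundedLifts (V₀ W : Submodule ℝ V) (L : ℝ) : Prop :=
  ∀ x ∈ W.map V₀.mkQ, ∃ u ∈ W, V₀.mkQ u = x ∧ ‖u‖ ≤ L * ‖x‖

lemma HasBoundedLifts.mono {V₀ W : Submodule ℝ V} {L L' : ℝ} (h : HasBoundedLifts V₀ W L)
    (hL : L ≤ L') : HasBoundedLifts V₀ W L' := fun x hx =>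
  let ⟨u, huW, hux, hu⟩ := h x hx
  ⟨u, huW, hux, hu.trans (by gcongr)⟩

lemma Submodule.sInf_norm_sub_le (K : Submodule ℝ V) (u : V) {w : V} (hw : w ∈ K) :
    sInf {r : ℝ | ∃ u₀ ∈ K, r = ‖u - u₀‖} ≤ ‖u - w‖ :=
  csInf_le ⟨0, by rintro r ⟨u₀, -, rfl⟩; positivity⟩ ⟨w, hw, rfl⟩

lemma Submodule.exists_norm_sub_eq_sInf (K : Submodule ℝ V) (hK : IsComplete (K : Set V))
    (u : V) : ∃ v ∈ K, ‖u - v‖ = sInf {r : ℝ | ∃ u₀ ∈ K, r = ‖u - u₀‖} := by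
  obtain ⟨v, hv, hmin⟩ := K.exists_norm_eq_iInf_of_complete_subspace hK u
  refine ⟨v, hv, hmin.trans (congrArg sInf ?_)⟩
  ext r
  simp [eq_comm]

lemma Submodule.exists_mkQ_eq_norm_eq [CompleteSpace V] (V₀ : Submodule ℝ V)
    [IsClosed (V₀ : Set V)] (x : V ⧸ V₀) : ∃ m, V₀.mkQ m = x ∧ ‖m‖ = ‖x‖ := by
  obtain ⟨u, rfl⟩ := V₀.mkQ_surjective x
  obtain ⟨v, hv, hmin⟩ := V₀.exists_norm_eq_iInf_of_complete_subspace
    (‹IsClosed (V₀ : Set V)›).isComplete u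
  refine ⟨u - v, by simpa using (Submodule.Quotient.mk_eq_zero V₀).mpr hv, ?_⟩
  rw [hmin, Submodule.mkQ_apply]
  refine Eq.trans ?_ (QuotientAddGroup.norm_mk (S := V₀.toAddSubgroup) u).symm
  simp [Metric.infDist_eq_iInf, dist_eq_norm]

lemma hasBoundedLifts_of_projection [CompleteSpace V] {V₀ Vh : Submodule ℝ V}
    [IsClosed (V₀ : Set V)] (P : V →L[ℝ] V) (hrange : ∀ u, P u ∈ Vh)
    (hproj : ∀ u ∈ Vh, P u = u) (hpres : ∀ u ∈ V₀, P u ∈ V₀) :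
    HasBoundedLifts V₀ Vh ‖P‖ := by
  rintro _ ⟨u, hu, rfl⟩
  obtain ⟨m, hm, hmn⟩ := V₀.exists_mkQ_eq_norm_eq (V₀.mkQ u)
  have hmu : m - u ∈ V₀ := (Submodule.Quotient.eq V₀).mp hm
  refine ⟨P m, hrange m, (Submodule.Quotient.eq V₀).mpr ?_, hmn ▸ P.le_opNorm m⟩
  simpa [hproj u hu] using hpres _ hmu

lemma HasBoundedLifts.of_le_of_sInf_norm_sub_le {V₀ W Vh : Submodule ℝ V}
    [FiniteDimensional ℝ W] (hW : W ≤ Vh) {κ L : ℝ} (hκ : 0 ≤ κ)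
    (hB : ∀ u ∈ W, sInf {r : ℝ | ∃ u₀ ∈ V₀ ⊓ W, r = ‖u - u₀‖} ≤
      κ * sInf {r : ℝ | ∃ u₀ ∈ V₀ ⊓ Vh, r = ‖u - u₀‖})
    (h : HasBoundedLifts V₀ Vh L) : HasBoundedLifts V₀ W (κ * L) := by
  rintro _ ⟨u, hu, rfl⟩
  obtain ⟨u', hu'Vh, hu'u, hu'⟩ := h _ (Submodule.mem_map_of_mem (hW hu))
  have hdiff : u - u' ∈ V₀ ⊓ Vh :=
    ⟨(Submodule.Quotient.eq V₀).mp hu'u.symm, sub_mem (hW hu) hu'Vh⟩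
  have hdist : sInf {r : ℝ | ∃ u₀ ∈ V₀ ⊓ Vh, r = ‖u - u₀‖} ≤ L * ‖V₀.mkQ u‖ := calc
    _ ≤ ‖u - (u - u')‖ := (V₀ ⊓ Vh).sInf_norm_sub_le u hdiff
    _ ≤ L * ‖V₀.mkQ u‖ := by rwa [sub_sub_cancel]
  obtain ⟨u₀, hu₀, hmin⟩ :=
    (V₀ ⊓ W).exists_norm_sub_eq_sInf (V₀ ⊓ W).complete_of_finiteDimensional u
  refine ⟨u - u₀, sub_mem hu hu₀.2, (Submodule.Quotient.eq V₀).mpr (by simpa using hu₀.1), ?_⟩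
  calc ‖u - u₀‖ ≤ κ * (L * ‖V₀.mkQ u‖) := hmin ▸ (hB u hu).trans (by gcongr)
    _ = κ * L * ‖V₀.mkQ u‖ := by ring

end BoundedLifts

section Stability

variable {V : Type*} [NormedAddCommGroup V] [InnerProductSpace ℝ V] {n : ℕ}
  {Vsub : Fin n → Submodule ℝ V} {V₀ : Submodule ℝ V} [IsClosed (V₀ : Set V)]

lemma splitNormSqX_le_of_hasBoundedLifts {L A : ℝ}
    (hlift : HasBoundedLifts V₀ (⨆ i, Vsub i) L) (hA : 0 ≤ A)
    (hstable : ∀ u ∈ ⨆ i, Vsub i, splitNormSqV Vsub u ≤ A * ‖u‖ ^ 2)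
    {f : V ⧸ V₀} (hf : f ∈ (⨆ i, Vsub i).map V₀.mkQ) :
    splitNormSqX V₀ Vsub f ≤ L ^ 2 * A * ‖f‖ ^ 2 := by
  obtain ⟨u, hu, rfl, hun⟩ := hlift f hf
  calc splitNormSqX V₀ Vsub (V₀.mkQ u) ≤ splitNormSqV Vsub u :=
        splitNormSqX_mkQ_le_splitNormSqV V₀ hu
    _ ≤ A * ‖u‖ ^ 2 := hstable u hu
    _ ≤ A * (L * ‖V₀.mkQ u‖) ^ 2 := by gcongr
    _ = L ^ 2 * A * ‖V₀.mkQ u‖ ^ 2 := by ring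

lemma div_mul_norm_sq_le_splitNormSqX (j : Fin n) {α L : ℝ} (hα : 0 ≤ α) (hα1 : α ≤ 1)
    (hstable : ∀ u ∈ ⨆ i, Vsub i, α * ‖u‖ ^ 2 ≤ splitNormSqV Vsub u)
    (hlift : HasBoundedLifts V₀ (⨆ i, Vsub i) L)
    (hlifts : ∀ i, i ≠ j → HasBoundedLifts V₀ (Vsub i) L)
    {f : V ⧸ V₀} (hf : f ∈ (⨆ i, Vsub i).map V₀.mkQ) :
    α / (2 * L ^ 2) * ‖f‖ ^ 2 ≤ splitNormSqX V₀ Vsub f := by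
  classical
  refine le_splitNormSqX V₀ hf fun g hg hgf => ?_
  set g' := Function.update g j 0
  have hg' : ∀ i, ∃ v ∈ Vsub i, V₀.mkQ v = g' i ∧ ‖v‖ ≤ L * ‖g' i‖ := by
    intro i
    by_cases hi : i = j
    · subst hi
      exact ⟨0, zero_mem _, by simp [g'], by simp [g']⟩
    · simpa [g', hi] using hlifts i hi (g i) (hg i)
  choose v hvV hvg hvn using hg'
  obtain ⟨w, -, hwg, hwn⟩ := hlift (g j) (Submodule.map_mono (le_iSup Vsub j) (hg j))
  set S := ∑ i, v i
  have hS : α * ‖S‖ ^ 2 ≤ L ^ 2 * ∑ i, ‖g' i‖ ^ 2 := calc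
    α * ‖S‖ ^ 2 ≤ splitNormSqV Vsub S := hstable S (Submodule.sum_mem_iSup hvV)
    _ ≤ ∑ i, ‖v i‖ ^ 2 := splitNormSqV_le_sum hvV
    _ ≤ ∑ i, (L * ‖g' i‖) ^ 2 := by gcongr with i; exact hvn i
    _ = L ^ 2 * ∑ i, ‖g' i‖ ^ 2 := by simp_rw [mul_pow, Finset.mul_sum]
  have hw : α * ‖w‖ ^ 2 ≤ L ^ 2 * ‖g j‖ ^ 2 := calc
    α * ‖w‖ ^ 2 ≤ ‖w‖ ^ 2 := mul_le_of_le_one_left (sq_nonneg _) hα1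
    _ ≤ (L * ‖g j‖) ^ 2 := by gcongr
    _ = L ^ 2 * ‖g j‖ ^ 2 := mul_pow _ _ _
  have hfw : ‖f‖ ≤ ‖w‖ + ‖S‖ := calc
    ‖f‖ = ‖V₀.mkQ (w + S)‖ := by
      rw [map_add, map_sum, hwg, Finset.sum_congr rfl fun i _ => hvg i,
        Finset.add_sum_update_zero, hgf]
    _ ≤ ‖w + S‖ := Submodule.Quotient.norm_mk_le _ _
    _ ≤ ‖w‖ + ‖S‖ := norm_add_le _ _
  have hnorms : ‖g j‖ ^ 2 + ∑ i, ‖g' i‖ ^ 2 = ∑ i, ‖g i‖ ^ 2 := by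
    rw [← Finset.add_sum_update_zero (fun i => ‖g i‖ ^ 2) j]
    congr 1
    refine Finset.sum_congr rfl fun i _ => ?_
    by_cases hi : i = j <;> simp [g', hi]
  rcases eq_or_ne L 0 with rfl | hL
  · simpa using Finset.sum_nonneg fun i _ => sq_nonneg ‖g i‖
  rw [div_mul_eq_mul_div, div_le_iff₀ (by positivity)]
  calc α * ‖f‖ ^ 2 ≤ α * (‖w‖ + ‖S‖) ^ 2 := by gcongr
    _ ≤ 2 * (α * ‖w‖ ^ 2 + α * ‖S‖ ^ 2) := by
      nlinarith [mul_nonneg hα (sq_nonneg (‖w‖ - ‖S‖))]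
    _ ≤ 2 * (L ^ 2 * ‖g j‖ ^ 2 + L ^ 2 * ∑ i, ‖g' i‖ ^ 2) := by gcongr
    _ = (∑ i, ‖g i‖ ^ 2) * (2 * L ^ 2) := by rw [← hnorms]; ring

end Stability

/-- Stability of the induced quotient splitting, with condition (B) weakened:
it is not required for the first subspace `V_{h,1}` (index `0` of `Fin n`). -/
theorem quotient_splitting_stability_weakened
    {V : Type*} [NormedAddCommGroup V] [InnerProductSpace ℝ V] [CompleteSpace V]
    (V₀ : Submodule ℝ V) [IsClosed (V₀ : Set V)]
    {n : ℕ} [NeZero n] (Vsub : Fin n → Submodule ℝ V) [∀ i, FiniteDimensional ℝ (Vsub i)]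
    (Vh : Submodule ℝ V) (hVh : Vh = ⨆ i, Vsub i)
    -- Condition (A): a bounded projection `Π_h` onto `V_h` preserving `𝕍₀`.
    (Pih : V →L[ℝ] V)
    (hPirange : ∀ u : V, Pih u ∈ Vh)
    (hPiproj : ∀ u ∈ Vh, Pih u = u)
    (hPipres : ∀ u ∈ V₀, Pih u ∈ V₀)
    -- Condition (B) for every index `i ≠ 0`, with constants `κ i > 0`.
    (κ : Fin n → ℝ) (hκ : ∀ i, i ≠ 0 → 0 < κ i)
    (hB : ∀ i, i ≠ 0 → ∀ u ∈ Vsub i,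
      sInf {r : ℝ | ∃ u₀ ∈ V₀ ⊓ Vsub i, r = ‖u - u₀‖} ≤
        κ i * sInf {r : ℝ | ∃ u₀ ∈ V₀ ⊓ Vh, r = ‖u - u₀‖})
    -- Stability of the splitting in `𝕍`.
    (α A : ℝ) (hα : 0 < α) (hA : 0 < A)
    (hstable : ∀ u ∈ Vh,
      α * ‖u‖ ^ 2 ≤ splitNormSqV Vsub u ∧ splitNormSqV Vsub u ≤ A * ‖u‖ ^ 2) :
    ∀ f ∈ Vh.map V₀.mkQ,
      (α / (2 * (⨆ i, if i = 0 then ‖Pih‖ else κ i) ^ 2 * ‖Pih‖ ^ 2)) * ‖f‖ ^ 2 ≤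
          splitNormSqX V₀ Vsub f ∧
      splitNormSqX V₀ Vsub f ≤ (‖Pih‖ ^ 2 * A) * ‖f‖ ^ 2 := by
  subst hVh
  have hc : ∀ i, (if i = 0 then ‖Pih‖ else κ i) ≤ ⨆ i, if i = 0 then ‖Pih‖ else κ i :=
    le_ciSup (Set.finite_range _).bddAbove
  have hlift := hasBoundedLifts_of_projection Pih hPirange hPiproj hPipres
  intro f hf
  refine ⟨?_, splitNormSqX_le_of_hasBoundedLifts hlift hA.le (fun u hu => (hstable u hu).2) hf⟩
  rcases eq_or_ne f 0 with rfl | hf0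
  · simpa using splitNormSqX_nonneg V₀ 0
  obtain ⟨u, hu, rfl⟩ := id hf
  have hu0 : u ≠ 0 := by rintro rfl; simp at hf0
  have hP : 1 ≤ ‖Pih‖ := by
    have := Pih.le_opNorm u
    rwa [hPiproj u hu, le_mul_iff_one_le_left (norm_pos_iff.mpr hu0)] at this
  have hα1 := le_one_of_mul_norm_sq_le_splitNormSqV (fun u hu => (hstable u hu).1) hu hu0
  have hlifts : ∀ i, i ≠ 0 → HasBoundedLifts V₀ (Vsub i) (κ i * ‖Pih‖) := fun i hi =>
    hlift.of_le_of_sInf_norm_sub_le (le_iSup Vsub i) (hκ i hi).le (hB i hi)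
  have h := div_mul_norm_sq_le_splitNormSqX 0 hα.le hα1 (fun u hu => (hstable u hu).1)
    (hlift.mono (le_mul_of_one_le_left (norm_nonneg _) (hP.trans (by simpa using hc 0))))
    (fun i hi => (hlifts i hi).mono (by gcongr; simpa [hi] using hc i)) hf
  rwa [mul_pow, ← mul_assoc] at h
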